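/- arXiv:0706.0249 — 2 statements merged into one kernel-verified Lean document; each statement's English description precedes it below -/
import Mathlib

section
/- For n = 5, the number f_5(k) of meaningful k-th order compositions of the differential operations on ℝ⁵ satisfies the recurrence f_5(k) = f_5(k−1) + 2 f_5(k−2) − f_5(k−3) for all k ≥ 4. -/
/-!
Counting sequences by their first entry, the number `w_k(a)` of admissible sequences of length
`k + 1` starting at `a` satisfies `w_{k+1}(a) = ∑_b A a b * w_k(b)` (the matrix has 0/1 entries),
so `w_k = Aᵏ 𝟙` and `f_n(k + 1) = 𝟙 ⬝ Aᵏ 𝟙`. For `n = 5` a direct computation gives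
`(A³ - A² - 2A + I) 𝟙 = 0`; applying `Aᵏ` and pairing with `𝟙` yields the recurrence.
-/

/-- Adjacency matrix of the composability digraph of the `n` first-order
differential operations `∇_1, …, ∇_n` on `ℝⁿ` (index `i : Fin n` represents
the operation `∇_{i+1}`): there is an edge `i → j` iff `j = i + 1` or
`i + j = n + 1` (in the 1-based indexing of the paper). -/
def adjA (n : ℕ) : Matrix (Fin n) (Fin n) ℤ :=
  Matrix.of fun i j =>
    if (j : ℕ) = (i : ℕ) + 1 ∨ (i : ℕ) + (j : ℕ) + 2 = n + 1 then 1 else 0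

def fCount (n k : ℕ) : ℕ :=
  (Finset.univ.filter fun s : Fin k → Fin n =>
    ∀ i j : Fin k, (j : ℕ) = (i : ℕ) + 1 → adjA n (s i) (s j) = 1).card

open Finset Matrix

section Walks

variable {ι : Type*} (A : Matrix ι ι ℤ)

def IsWalk {m : ℕ} (s : Fin m → ι) : Prop :=
  ∀ i j : Fin m, (j : ℕ) = i + 1 → A (s i) (s j) = 1

instance {m : ℕ} : DecidablePred (IsWalk A (m := m)) := fun _ => by
  unfold IsWalk; infer_instance

lemma isWalk_of_subsingleton (s : Fin 1 → ι) : IsWalk A s := by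
  intro i j hij
  omega

lemma isWalk_cons_iff {m : ℕ} (a : ι) (s : Fin (m + 1) → ι) :
    IsWalk A (Fin.cons a s : Fin (m + 2) → ι) ↔ A a (s 0) = 1 ∧ IsWalk A s := by
  constructor
  · intro h
    exact ⟨h 0 1 rfl, fun i j hij => h i.succ j.succ (by simp [hij])⟩
  · rintro ⟨h0, hs⟩ i j hij
    cases i using Fin.cases with
    | zero => obtain rfl : j = 1 := Fin.ext hij; exact h0
    | succ i =>
      cases j using Fin.cases with
      | zero => simp at hij
      | succ j => exact hs i j (by simpa using hij)

variable [Fintype ι] [DecidableEq ι]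

def walksFrom (k : ℕ) (a : ι) : Finset (Fin (k + 1) → ι) :=
  {s | IsWalk A s ∧ s 0 = a}

lemma walksFrom_zero (a : ι) : walksFrom A 0 a = {fun _ => a} := by
  ext s
  simp only [walksFrom, mem_filter, mem_univ, true_and, mem_singleton,
    isWalk_of_subsingleton, funext_iff]
  exact ⟨fun h i => Fin.fin_one_eq_zero i ▸ h, fun h => h 0⟩

lemma walksFrom_succ (k : ℕ) (a : ι) :
    walksFrom A (k + 1) a =
      Finset.map ⟨Fin.cons a, Fin.cons_right_injective (α := fun _ => ι) a⟩
        {t : Fin (k + 1) → ι | A a (t 0) = 1 ∧ IsWalk A t} := by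
  ext s
  cases s using Fin.consCases with
  | cons b t =>
    simp only [walksFrom, mem_filter, mem_univ, isWalk_cons_iff, Fin.cons_zero, true_and, mem_map,
      Function.Embedding.coeFn_mk, Fin.cons_inj, exists_eq_right_right]
    constructor <;> rintro ⟨hw, rfl⟩ <;> exact ⟨hw, rfl⟩

lemma card_walksFrom_succ (hA : ∀ a b, A a b = 0 ∨ A a b = 1) (k : ℕ) (a : ι) :
    (#(walksFrom A (k + 1) a) : ℤ) = ∑ b, A a b * #(walksFrom A k b) := by
  rw [walksFrom_succ, card_map, card_eq_sum_card_fiberwise (f := fun t => t 0)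
    (t := univ) (fun _ _ => mem_univ _)]
  push_cast
  refine sum_congr rfl fun b _ => ?_
  rw [filter_filter]
  rcases hA a b with h | h
  · rw [h, zero_mul, Int.natCast_eq_zero, card_eq_zero, filter_eq_empty_iff]
    rintro t - ⟨⟨ht, -⟩, rfl⟩
    simp [h] at ht
  · rw [h, one_mul, walksFrom]
    congr 2
    exact filter_congr fun t _ =>
      ⟨fun ⟨⟨_, hw⟩, h0⟩ => ⟨hw, h0⟩, fun ⟨hw, h0⟩ => ⟨⟨h0 ▸ h, hw⟩, h0⟩⟩

lemma card_walksFrom_eq_pow_mulVec (hA : ∀ a b, A a b = 0 ∨ A a b = 1) (k : ℕ) (a : ι) :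
    (#(walksFrom A k a) : ℤ) = (A ^ k *ᵥ 1) a := by
  induction k generalizing a with
  | zero => simp [walksFrom_zero]
  | succ k ih =>
    rw [card_walksFrom_succ A hA, pow_succ', ← mulVec_mulVec]
    simp only [ih]
    rfl

lemma card_isWalk_eq_one_dotProduct_pow_mulVec (hA : ∀ a b, A a b = 0 ∨ A a b = 1) (k : ℕ) :
    (#{s : Fin (k + 1) → ι | IsWalk A s} : ℤ) = 1 ⬝ᵥ (A ^ k *ᵥ 1) := by
  rw [card_eq_sum_card_fiberwise (f := fun s => s 0) (t := univ) (fun _ _ => mem_univ _)]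
  push_cast
  simp only [one_dotProduct, filter_filter, ← card_walksFrom_eq_pow_mulVec A hA]
  rfl

end Walks

lemma dotProduct_pow_mulVec_recurrence {ι R : Type*} [Fintype ι] [DecidableEq ι] [CommRing R]
    {A : Matrix ι ι R} {v : ι → R} (h : (A ^ 3 - A ^ 2 - 2 • A + 1) *ᵥ v = 0) (w : ι → R)
    (k : ℕ) :
    w ⬝ᵥ (A ^ (k + 3) *ᵥ v) =
      w ⬝ᵥ (A ^ (k + 2) *ᵥ v) + 2 * w ⬝ᵥ (A ^ (k + 1) *ᵥ v) - w ⬝ᵥ (A ^ k *ᵥ v) := by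
  have hk : A ^ k * (A ^ 3 - A ^ 2 - 2 • A + 1) =
      A ^ (k + 3) - A ^ (k + 2) - 2 • A ^ (k + 1) + A ^ k := by
    rw [mul_add, mul_sub, mul_sub, mul_smul_comm, ← pow_add, ← pow_add, ← pow_succ, mul_one]
  have h0 : w ⬝ᵥ ((A ^ (k + 3) - A ^ (k + 2) - 2 • A ^ (k + 1) + A ^ k) *ᵥ v) = 0 := by
    rw [← hk, ← mulVec_mulVec, h, mulVec_zero, dotProduct_zero]
  simp only [two_smul, sub_mulVec, add_mulVec, dotProduct_sub, dotProduct_add] at h0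
  linear_combination h0

lemma adjA_eq_zero_or_one (n : ℕ) (i j : Fin n) : adjA n i j = 0 ∨ adjA n i j = 1 := by
  simp only [adjA, of_apply]
  split_ifs <;> simp

-- `A_5` itself does not satisfy this cubic; only the all-ones vector is annihilated by it.
lemma adjA_five_cubic_mulVec_one : (adjA 5 ^ 3 - adjA 5 ^ 2 - 2 • adjA 5 + 1) *ᵥ 1 = 0 := by
  decide

lemma fCount_succ_eq_dotProduct_pow_mulVec (n k : ℕ) :
    (fCount n (k + 1) : ℤ) = 1 ⬝ᵥ (adjA n ^ k *ᵥ 1) :=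
  card_isWalk_eq_one_dotProduct_pow_mulVec _ (adjA_eq_zero_or_one n) k

/-- For `n = 5`: `f_5(k) = f_5(k-1) + 2 f_5(k-2) - f_5(k-3)` for all `k ≥ 4`. -/
theorem fCount_five_recurrence (k : ℕ) (hk : 4 ≤ k) :
    (fCount 5 k : ℤ) =
      (fCount 5 (k - 1) : ℤ) + 2 * (fCount 5 (k - 2) : ℤ) - (fCount 5 (k - 3) : ℤ) := by
  obtain ⟨m, rfl⟩ : ∃ m, k = m + 4 := ⟨k - 4, by omega⟩
  simp only [show m + 4 - 1 = m + 2 + 1 by omega, show m + 4 - 2 = m + 1 + 1 by omega,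
    show m + 4 - 3 = m + 1 by omega, fCount_succ_eq_dotProduct_pow_mulVec,
    dotProduct_pow_mulVec_recurrence adjA_five_cubic_mulVec_one]
end

section
/- For n = 6, the number g_6(k) of meaningful k-th order compositions of the differential operations together with the Gateaux directional derivative on ℝ⁶ satisfies the recurrence g_6(k) = g_6(k−1) + 3 g_6(k−2) − 2 g_6(k−3) − g_6(k−4) for all k ≥ 5. -/
/-- Adjacency matrix of the composability digraph of the Gateaux directional
derivative `∇_0` together with the `n` first-order differential operations
`∇_1, …, ∇_n` on `ℝⁿ` (index `i : Fin (n+1)` represents `∇_i`): there is an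
edge `i → j` iff `(i = 0 ∧ j = 0)` or `(i = n ∧ j = 0)` or `j = i + 1` or
`i + j = n + 1`. -/
def adjB (n : ℕ) : Matrix (Fin (n + 1)) (Fin (n + 1)) ℤ :=
  Matrix.of fun i j =>
    if ((i : ℕ) = 0 ∧ (j : ℕ) = 0) ∨ ((i : ℕ) = n ∧ (j : ℕ) = 0) ∨
        (j : ℕ) = (i : ℕ) + 1 ∨ (i : ℕ) + (j : ℕ) = n + 1 then 1 else 0

/-- `gCount n k` is the number of meaningful `k`-th order compositions of the
differential operations together with the Gateaux directional derivative on
`ℝⁿ`, i.e. the number of sequences `(i_1, …, i_k) ∈ {0, 1, …, n}^k` each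
consecutive pair of which is composable. -/
def gCount (n k : ℕ) : ℕ :=
  (Finset.univ.filter fun s : Fin k → Fin (n + 1) =>
    ∀ i j : Fin k, (j : ℕ) = (i : ℕ) + 1 → adjB n (s i) (s j) = 1).card

open Matrix

lemma adjB_zero_or_one (n : ℕ) (x y : Fin (n+1)) : adjB n x y = 0 ∨ adjB n x y = 1 := by
  unfold adjB
  simp only [Matrix.of_apply]
  split <;> simp

/-- count of valid sequences of length k+1 starting at x -/
def cntB (n k : ℕ) (x : Fin (n+1)) : ℕ :=
  (Finset.univ.filter fun s : Fin (k+1) → Fin (n+1) =>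
    (∀ i j : Fin (k+1), (j : ℕ) = (i : ℕ) + 1 → adjB n (s i) (s j) = 1) ∧ s 0 = x).card

lemma cntB_zero (n : ℕ) (x : Fin (n+1)) : cntB n 0 x = 1 := by
  rw [cntB, Finset.card_eq_one]
  refine ⟨fun _ => x, ?_⟩
  ext s
  simp only [Finset.mem_filter, Finset.mem_univ, true_and, Finset.mem_singleton]
  constructor
  · rintro ⟨-, h0⟩
    funext i
    have hi := i.isLt
    have : i = 0 := Fin.ext (by omega)
    rw [this, h0]
  · rintro rfl
    refine ⟨fun i j hij => ?_, rfl⟩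
    have hi := i.isLt
    have hj := j.isLt
    omega

lemma cntB_succ (n k : ℕ) (x : Fin (n+1)) :
    (cntB n (k+1) x : ℤ) = ∑ y : Fin (n+1), adjB n x y * (cntB n k y : ℤ) := by
  have hfib : cntB n (k+1) x =
      ∑ y : Fin (n+1),
        ((Finset.univ.filter fun s : Fin (k+2) → Fin (n+1) =>
          ((∀ i j : Fin (k+2), (j : ℕ) = (i : ℕ) + 1 → adjB n (s i) (s j) = 1) ∧ s 0 = x)).filter
          fun s => s 1 = y).card := by
    rw [cntB]
    exact Finset.card_eq_sum_card_fiberwise (fun s _ => Finset.mem_univ (s 1))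
  have hterm : ∀ y : Fin (n+1),
      (((Finset.univ.filter fun s : Fin (k+2) → Fin (n+1) =>
          ((∀ i j : Fin (k+2), (j : ℕ) = (i : ℕ) + 1 → adjB n (s i) (s j) = 1) ∧ s 0 = x)).filter
          fun s => s 1 = y).card : ℤ) = adjB n x y * (cntB n k y : ℤ) := by
    intro y
    rcases adjB_zero_or_one n x y with h | h
    · rw [h, zero_mul]
      norm_cast
      rw [Finset.card_eq_zero]
      rw [Finset.eq_empty_iff_forall_notMem]
      intro s hs
      simp only [Finset.mem_filter, Finset.mem_univ, true_and] at hs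
      obtain ⟨⟨hc, h0⟩, h1⟩ := hs
      have := hc 0 1 (by simp [Fin.val_one])
      rw [h0, h1, h] at this
      exact absurd this (by norm_num)
    · rw [h, one_mul]
      norm_cast
      rw [cntB]
      apply Finset.card_bij (fun s _ => Fin.tail s)
      · intro s hs
        simp only [Finset.mem_filter, Finset.mem_univ, true_and] at hs ⊢
        obtain ⟨⟨hc, h0⟩, h1⟩ := hs
        refine ⟨fun i j hij => ?_, ?_⟩
        · exact hc i.succ j.succ (by simp [Fin.val_succ, hij])
        · show s (Fin.succ 0) = y
          rwa [Fin.succ_zero_eq_one]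
      · intro s hs t ht hst
        simp only [Finset.mem_filter, Finset.mem_univ, true_and] at hs ht
        funext i
        refine Fin.cases ?_ ?_ i
        · rw [hs.1.2, ht.1.2]
        · intro i'
          exact congrFun hst i'
      · intro t ht
        simp only [Finset.mem_filter, Finset.mem_univ, true_and] at ht
        obtain ⟨hc, h0⟩ := ht
        set s' : Fin (k+2) → Fin (n+1) := Fin.cons x t with hs'
        have hcond : ∀ i j : Fin (k+2), (j : ℕ) = (i : ℕ) + 1 →
            adjB n (s' i) (s' j) = 1 := by
          intro i j hij
          rcases Fin.eq_zero_or_eq_succ i with rfl | ⟨i', rfl⟩ <;>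
            rcases Fin.eq_zero_or_eq_succ j with rfl | ⟨j', rfl⟩
          · simp at hij
          · have hj' : (j' : ℕ) = 0 := by
              rw [Fin.val_succ, Fin.val_zero] at hij
              exact Nat.add_right_cancel hij
            have : j' = 0 := Fin.ext hj'
            subst this
            simpa [hs', Fin.cons_succ, h0] using h
          · rw [Fin.val_zero, Fin.val_succ] at hij
            exact absurd hij.symm (Nat.succ_ne_zero _)
          · have : (j' : ℕ) = (i' : ℕ) + 1 := by
              rw [Fin.val_succ, Fin.val_succ] at hij
              exact Nat.add_right_cancel hij
            simpa [hs', Fin.cons_succ] using hc i' j' this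
        refine ⟨s', ?_, ?_⟩
        · simp only [Finset.mem_filter, Finset.mem_univ, true_and]
          refine ⟨⟨hcond, by simp [hs']⟩, ?_⟩
          rw [hs', ← Fin.succ_zero_eq_one, Fin.cons_succ]
          exact h0
        · funext i
          simp [hs', Fin.tail]
  rw [hfib]
  push_cast
  exact Finset.sum_congr rfl fun y _ => hterm y

lemma cntB_eq (n k : ℕ) (x : Fin (n+1)) :
    (cntB n k x : ℤ) = ((adjB n)^k *ᵥ (1 : Fin (n+1) → ℤ)) x := by
  induction k generalizing x with
  | zero => rw [cntB_zero, pow_zero, Matrix.one_mulVec]; rfl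
  | succ k ih =>
    have ih' := ih
    simp only [Matrix.mulVec, dotProduct] at ih'
    rw [cntB_succ, pow_succ', ← Matrix.mulVec_mulVec]
    simp only [Matrix.mulVec, dotProduct]
    exact Finset.sum_congr rfl fun y _ => by rw [ih' y]

lemma gCount_eq (n k : ℕ) :
    (gCount n (k+1) : ℤ) = ∑ x : Fin (n+1), ((adjB n)^k *ᵥ (1 : Fin (n+1) → ℤ)) x := by
  have : gCount n (k+1) = ∑ x : Fin (n+1), cntB n k x := by
    rw [gCount]
    rw [Finset.card_eq_sum_card_fiberwise
      (f := fun s : Fin (k+1) → Fin (n+1) => s 0) (t := Finset.univ)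
      (fun s _ => Finset.mem_univ _)]
    refine Finset.sum_congr rfl fun x _ => ?_
    rw [cntB, Finset.filter_filter]
  rw [this]
  push_cast
  exact Finset.sum_congr rfl fun x _ => cntB_eq n k x

/-- For `n = 6`: `g_6(k) = g_6(k-1) + 3 g_6(k-2) - 2 g_6(k-3) - g_6(k-4)`
for all `k ≥ 5`. -/
theorem gCount_six_recurrence (k : ℕ) (hk : 5 ≤ k) :
    (gCount 6 k : ℤ) =
      (gCount 6 (k - 1) : ℤ) + 3 * (gCount 6 (k - 2) : ℤ)
        - 2 * (gCount 6 (k - 3) : ℤ) - (gCount 6 (k - 4) : ℤ) := by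
  obtain ⟨m, rfl⟩ : ∃ m, k = m + 5 := ⟨k - 5, by omega⟩
  have h1 : m + 5 - 1 = m + 4 := by omega
  have h2 : m + 5 - 2 = m + 3 := by omega
  have h3 : m + 5 - 3 = m + 2 := by omega
  have h4 : m + 5 - 4 = m + 1 := by omega
  rw [h1, h2, h3, h4]
  have key : (adjB 6)^4 *ᵥ (1 : Fin 7 → ℤ) =
      (adjB 6)^3 *ᵥ 1 + (3 : ℤ) • ((adjB 6)^2 *ᵥ 1) - (2 : ℤ) • ((adjB 6)^1 *ᵥ 1)
        - (adjB 6)^0 *ᵥ 1 := by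
    decide
  have hrec : (adjB 6)^(m+4) *ᵥ (1 : Fin 7 → ℤ) =
      (adjB 6)^(m+3) *ᵥ 1 + (3 : ℤ) • ((adjB 6)^(m+2) *ᵥ 1)
        - (2 : ℤ) • ((adjB 6)^(m+1) *ᵥ 1) - (adjB 6)^m *ᵥ 1 := by
    have h := congrArg (fun v => (adjB 6)^m *ᵥ v) key
    simp only [Matrix.mulVec_add, Matrix.mulVec_sub, Matrix.mulVec_smul,
      Matrix.mulVec_mulVec, ← pow_add] at h
    simpa using h
  have G : ∀ j : ℕ, (gCount 6 (j+1) : ℤ) =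
      ∑ x : Fin 7, ((adjB 6)^j *ᵥ (1 : Fin 7 → ℤ)) x := fun j => gCount_eq 6 j
  show (gCount 6 (m+4+1) : ℤ) =
      (gCount 6 (m+3+1) : ℤ) + 3 * (gCount 6 (m+2+1) : ℤ)
        - 2 * (gCount 6 (m+1+1) : ℤ) - (gCount 6 (m+0+1) : ℤ)
  rw [G (m+4), G (m+3), G (m+2), G (m+1), G (m+0)]
  have hm0 : m + 0 = m := by omega
  rw [hm0, hrec]
  simp only [Pi.sub_apply, Pi.add_apply, Pi.smul_apply, smul_eq_mul,
    Finset.sum_sub_distrib, Finset.sum_add_distrib, ← Finset.mul_sum]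
end
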